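/- Let p and q be distinct primitive words of equal length over an alphabet with at least two letters. Then for all positive integers n, m with (n,m) ≠ (1,1), the word p^n q^m is primitive. -/

import Mathlib

variable {A : Type*}

/-- k-fold concatenation of a word with itself. -/
def pw (w : List A) : ℕ → List A
  | 0 => []
  | n + 1 => w ++ pw w n

/-- A nonempty word is primitive if it is not a proper power. -/
def Primitive (w : List A) : Prop :=
  w ≠ [] ∧ ∀ (v : List A) (m : ℕ), w = pw v m → m = 1

/-! Suppose `p^n q^m = v^k` with `k ≥ 2`, and put `d = |v|`, `L = |p| = |q|`, `g = gcd d L`.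
Counting lengths in units of `g` shows that `p^n` or `q^m` has length at least `d + L - g`.
That block has the periods `d` and `L`, hence the period `g` by the Fine–Wilf periodicity lemma;
as `g ∣ L` and the repeated word is primitive, `g = L`. So `v` is a power of it, and comparing
`v^k` with `p^n q^m` gives `p = q`. The case of `q^m` is the case of `p^n` for the reversed words. -/

open List

@[simp]
theorem length_pw (w : List A) (n : ℕ) : (pw w n).length = n * w.length := by
  induction n with
  | zero => simp [pw]
  | succ n ih => simp [pw, ih, Nat.succ_mul, Nat.add_comm]

theorem pw_add (w : List A) (a b : ℕ) : pw w (a + b) = pw w a ++ pw w b := by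
  induction a with
  | zero => simp [pw]
  | succ a ih => simp [Nat.succ_add, pw, ih]

theorem pw_succ (w : List A) (n : ℕ) : pw w (n + 1) = pw w n ++ w := by
  rw [pw_add]
  simp [pw]

theorem pw_mul (w : List A) (t k : ℕ) : pw (pw w t) k = pw w (t * k) := by
  induction k with
  | zero => rfl
  | succ k ih => rw [pw_succ, ih, Nat.mul_succ, pw_add]

theorem reverse_pw (w : List A) (n : ℕ) : (pw w n).reverse = pw w.reverse n := by
  induction n with
  | zero => rfl
  | succ n ih => rw [pw, reverse_append, ih, pw_succ]

theorem prefix_pw_of_pos (w : List A) {n : ℕ} (hn : 0 < n) : w <+: pw w n := by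
  obtain ⟨n, rfl⟩ := Nat.exists_eq_add_of_lt hn
  exact prefix_append _ _

theorem eq_of_pw_eq_pw {p q : List A} {n : ℕ} (hn : 0 < n) (hlen : p.length = q.length)
    (h : pw p n = pw q n) : p = q := by
  obtain ⟨n, rfl⟩ := Nat.exists_eq_add_of_lt hn
  exact (append_inj h hlen).1

theorem hasPeriod_pw (w : List A) (n : ℕ) : HasPeriod (pw w n) w.length := by
  cases n with
  | zero => simp [pw]
  | succ n =>
    rw [HasPeriod, pw, take_left' rfl, prefix_append_right_inj, ← pw, pw_succ]
    exact prefix_append _ _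

theorem List.HasPeriod.eq_pw_take {w : List A} {g s : ℕ} (hw : HasPeriod w g)
    (hlen : w.length = g * s) : w = pw (w.take g) s := by
  induction s generalizing w with
  | zero => simp_all [pw]
  | succ s ih =>
    rcases Nat.eq_zero_or_pos s with rfl | hs
    · simp_all [pw]
    have hdrop : (w.drop g).length = g * s := by simp [hlen, Nat.mul_succ]
    have htake : (w.drop g).take g = w.take g := by
      apply (hw.drop_prefix.take g).eq_of_length
      simp [hdrop, hlen, Nat.le_mul_of_pos_right g hs,
        Nat.le_mul_of_pos_right g s.succ_pos]
    rw [pw, ← htake, ← ih (hw.infix (drop_suffix g w).isInfix) hdrop, htake, take_append_drop]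

theorem Primitive.reverse {p : List A} (hp : Primitive p) : Primitive p.reverse :=
  ⟨by simpa using hp.1, fun v m h => hp.2 v.reverse m (by rw [← reverse_pw, ← h, reverse_reverse])⟩

theorem Primitive.eq_length_of_hasPeriod {p : List A} (hp : Primitive p) {g : ℕ}
    (hper : HasPeriod p g) (hdvd : g ∣ p.length) : g = p.length := by
  obtain ⟨s, hs⟩ := hdvd
  rw [hs, hp.2 _ s (hper.eq_pw_take hs), mul_one]

theorem eq_of_pw_append_pw_eq_pw {p q v : List A} {n m k : ℕ} (hp : Primitive p)
    (hlen : p.length = q.length) (hn : 0 < n) (hm : 0 < m) (h : pw p n ++ pw q m = pw v k)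
    (hlong : v.length + p.length - v.length.gcd p.length ≤ n * p.length) : p = q := by
  have hL : 0 < p.length := length_pos_iff.mpr hp.1
  have hlens : (n + m) * p.length = k * v.length := by
    simpa [hlen, add_mul] using congrArg length h
  have hper : HasPeriod (pw p n) (v.length.gcd p.length) :=
    ((hasPeriod_pw v k).infix ⟨[], pw q m, by simp [h]⟩).gcd (hasPeriod_pw p n)
      (by simpa using hlong)
  have hgcd : v.length.gcd p.length = p.length :=
    hp.eq_length_of_hasPeriod (hper.infix (prefix_pw_of_pos p hn).isInfix)
      (Nat.gcd_dvd_right _ _)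
  obtain ⟨t, ht⟩ : p.length ∣ v.length := hgcd ▸ Nat.gcd_dvd_left _ _
  have htn : t ≤ n := by
    rw [hgcd, ht] at hlong
    exact Nat.le_of_mul_le_mul_right (by rw [mul_comm]; omega) hL
  have hk : 0 < k := Nat.pos_of_mul_pos_right (hlens ▸ Nat.mul_pos (Nat.add_pos_left hn m) hL)
  have hv : v = pw p t := by
    rw [prefix_iff_eq_take.mp (prefix_pw_of_pos v hk), ← h, ht,
      show n = t + (n - t) by omega, pw_add, append_assoc, take_left' (by simp [mul_comm])]
  have htk : t * k = n + m := by
    apply Nat.eq_of_mul_eq_mul_right hL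
    rw [hlens, ht]
    ring
  have hpm : pw p n ++ pw p m = pw p n ++ pw q m := by
    rw [h, hv, pw_mul, htk, pw_add]
  exact eq_of_pw_eq_pw hm hlen (append_cancel_left hpm)

theorem add_sub_gcd_le_mul_or_le_mul {d L n m k : ℕ} (hL : 0 < L) (hnm : 3 ≤ n + m)
    (hk : 2 ≤ k) (h : k * d = (n + m) * L) :
    d + L - d.gcd L ≤ n * L ∨ d + L - d.gcd L ≤ m * L := by
  obtain ⟨a, b, hab, hd, hL'⟩ := Nat.exists_coprime d L
  set g := d.gcd L
  have hg : 0 < g := Nat.gcd_pos_of_pos_right d hL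
  have hb : 0 < b := by rcases Nat.eq_zero_or_pos b with rfl | hb <;> simp_all
  have hka : k * a = (n + m) * b := by
    apply Nat.eq_of_mul_eq_mul_right hg
    rw [mul_assoc, mul_assoc, ← hd, ← hL', h]
  obtain ⟨j, rfl⟩ : b ∣ k := hab.symm.dvd_of_dvd_mul_right ⟨n + m, by rw [hka, mul_comm]⟩
  have hja : j * a = n + m := by
    apply Nat.eq_of_mul_eq_mul_left hb
    rw [← mul_assoc, hka, mul_comm]
  by_contra! hc
  rw [hd, hL'] at hc
  -- both sides are multiples of `g`, so a strict inequality between them has slack `g`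
  have slack {x : ℕ} (hx : x * b * g < a * g + b * g - g) : x * b + 2 ≤ a + b := by
    have : x * b * g + g < a * g + b * g := by omega
    nlinarith
  have hn := slack (by simpa [mul_assoc] using hc.1)
  have hm := slack (by simpa [mul_assoc] using hc.2)
  obtain rfl | rfl | hb3 : b = 1 ∨ b = 2 ∨ 3 ≤ b := by omega
  · nlinarith
  · obtain rfl : n = m := by nlinarith
    obtain rfl : a = 2 * n := by nlinarith
    obtain ⟨r, hr⟩ := Nat.coprime_two_right.mp hab
    omega
  · obtain _ | _ | j := j
    · omega
    · nlinarith
    · nlinarith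

theorem pow_mul_pow_primitive_general (p q : List A)
    (hp : Primitive p) (hq : Primitive q) (hpq : p ≠ q) (hlen : p.length = q.length)
    (n m : ℕ) (hn : 0 < n) (hm : 0 < m) (hnm : (n, m) ≠ (1, 1)) :
    Primitive (pw p n ++ pw q m) := by
  have hL : 0 < p.length := length_pos_iff.mpr hp.1
  refine ⟨fun h => by simpa [hL.ne', hn.ne'] using congrArg length h, fun v k h => ?_⟩
  have hlens : k * v.length = (n + m) * p.length := by
    simpa [hlen, add_mul] using (congrArg length h).symm
  have hk : k ≠ 0 := by
    rintro rfl
    simp [hn.ne', hL.ne'] at hlens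
  by_contra hk1
  rcases add_sub_gcd_le_mul_or_le_mul hL (by grind) (by omega) hlens with hlong | hlong
  · exact hpq (eq_of_pw_append_pw_eq_pw hp hlen hn hm h hlong)
  · have hrev : pw q.reverse m ++ pw p.reverse n = pw v.reverse k := by
      rw [← reverse_pw, ← reverse_pw, ← reverse_append, h, reverse_pw]
    refine hpq (reverse_injective (eq_of_pw_append_pw_eq_pw hq.reverse ?_ hm hn hrev ?_)).symm
    · simp [hlen]
    · simpa [hlen] using hlong

theorem pow_mul_pow_primitive (hA : ∃ a b : A, a ≠ b) (p q : List A)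
    (hp : Primitive p) (hq : Primitive q) (hpq : p ≠ q) (hlen : p.length = q.length)
    (n m : ℕ) (hn : 0 < n) (hm : 0 < m) (hnm : (n, m) ≠ (1, 1)) :
    Primitive (pw p n ++ pw q m) :=
  pow_mul_pow_primitive_general p q hp hq hpq hlen n m hn hm hnm
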